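/- arXiv:2509.03760 — 2 statements merged into one kernel-verified Lean document; each statement's English description precedes it below -/
import Mathlib

section
/- Let r = e^{sφ} and ρ = e^{−sφ} with φ(t,x) = θ(t)e^{λψ(x)}, where ψ is smooth on a neighborhood of the closure of G, θ is bounded, s ≥ 1, λ ≥ 1. Then for any multi-index α, the product r·∂^α ρ satisfies r·∂^α ρ = (−sφ)^{|α|} λ^{|α|} (∇ψ)^α + s^{|α|−1}·O_λ(1), uniformly on G; in particular |r·∂^α ρ| ≤ C_λ · s^{|α|} for a constant C_λ depending only on λ, ψ, θ, and α. -/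
noncomputable section

/-- Partial derivative in the direction of the `i`-th standard basis vector. -/
def pd (n : ℕ) (i : Fin n) (f : (Fin n → ℝ) → ℝ) : (Fin n → ℝ) → ℝ :=
  fun x => fderiv ℝ f x (Pi.single i 1)

/-- Multi-index partial derivative `∂^α`. -/
def md (n : ℕ) (α : Fin n → ℕ) (f : (Fin n → ℝ) → ℝ) : (Fin n → ℝ) → ℝ :=
  (List.finRange n).foldr (fun i g => (pd n i)^[α i] g) f

namespace WeightAux

variable {n : ℕ}

/-- shift a coefficient family by one -/
def shf (b : ℕ → (Fin n → ℝ) → ℝ) : ℕ → (Fin n → ℝ) → ℝ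
  | 0 => fun _ => 0
  | (k+1) => b k

lemma pd_contDiff (i : Fin n) {f : (Fin n → ℝ) → ℝ} (hf : ContDiff ℝ (⊤ : ℕ∞) f) :
    ContDiff ℝ (⊤ : ℕ∞) (pd n i f) :=
  (hf.fderiv_right (by simp)).clm_apply contDiff_const

lemma pd_rep (ψ : (Fin n → ℝ) → ℝ) (hψ : ContDiff ℝ (⊤ : ℕ∞) ψ) (lam : ℝ) (i : Fin n) (m : ℕ)
    (b : ℕ → (Fin n → ℝ) → ℝ) (hb : ∀ k, ContDiff ℝ (⊤ : ℕ∞) (b k)) (hbtop : b (m+1) = fun _ => 0)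
    (σ : ℝ) (x : Fin n → ℝ) :
    pd n i (fun y => (∑ k ∈ Finset.range (m+1), σ^k * b k y) *
        Real.exp (-(σ * Real.exp (lam * ψ y)))) x
      = (∑ k ∈ Finset.range (m+2), σ^k *
          (pd n i (b k) x - lam * pd n i ψ x * Real.exp (lam * ψ x) * shf b k x)) *
        Real.exp (-(σ * Real.exp (lam * ψ x))) := by
  have hψd : HasFDerivAt ψ (fderiv ℝ ψ x) x := (hψ.differentiable (by simp) x).hasFDerivAt
  have hE : HasFDerivAt (fun y => Real.exp (lam * ψ y))
      (Real.exp (lam * ψ x) • (lam • fderiv ℝ ψ x)) x :=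
    ((Real.hasDerivAt_exp (lam * ψ x)).comp_hasFDerivAt x (hψd.const_mul lam) :)
  have hw : HasFDerivAt (fun y => -(σ * Real.exp (lam * ψ y)))
      (-(σ • (Real.exp (lam * ψ x) • (lam • fderiv ℝ ψ x)))) x := (hE.const_mul σ).neg
  have hv : HasFDerivAt (fun y => Real.exp (-(σ * Real.exp (lam * ψ y))))
      (Real.exp (-(σ * Real.exp (lam * ψ x))) •
        (-(σ • (Real.exp (lam * ψ x) • (lam • fderiv ℝ ψ x))))) x :=
    (Real.hasDerivAt_exp _).comp_hasFDerivAt x hw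
  have hu : HasFDerivAt (fun y => ∑ k ∈ Finset.range (m+1), σ^k * b k y)
      (∑ k ∈ Finset.range (m+1), σ^k • fderiv ℝ (b k) x) x := by
    apply HasFDerivAt.fun_sum
    intro k _
    exact (((hb k).differentiable (by simp) x).hasFDerivAt).const_mul (σ^k)
  have hfd := (hu.fun_mul hv).fderiv
  show fderiv ℝ _ x (Pi.single i 1) = _
  rw [hfd]
  simp only [ContinuousLinearMap.add_apply, ContinuousLinearMap.smul_apply,
    ContinuousLinearMap.neg_apply, ContinuousLinearMap.sum_apply, smul_eq_mul, smul_neg]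
  have hpdtop : pd n i (b (m+1)) x = 0 := by rw [hbtop]; simp [pd]
  have hA : ∑ k ∈ Finset.range (m+2), σ^k *
        (pd n i (b k) x - lam * pd n i ψ x * Real.exp (lam * ψ x) * shf b k x)
      = (∑ k ∈ Finset.range (m+1), σ^k * pd n i (b k) x)
        - σ * (lam * pd n i ψ x * Real.exp (lam * ψ x)) *
          (∑ k ∈ Finset.range (m+1), σ^k * b k x) := by
    have e1 : ∀ k, σ^k * (pd n i (b k) x - lam * pd n i ψ x * Real.exp (lam * ψ x) * shf b k x)
        = σ^k * pd n i (b k) x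
          - σ^k * (lam * pd n i ψ x * Real.exp (lam * ψ x) * shf b k x) := fun k => by ring
    rw [Finset.sum_congr rfl (fun k _ => e1 k), Finset.sum_sub_distrib]
    congr 1
    · rw [Finset.sum_range_succ, hpdtop]; ring
    · rw [Finset.sum_range_succ' (fun k => σ^k *
          (lam * pd n i ψ x * Real.exp (lam * ψ x) * shf b k x)) (m+1)]
      simp only [shf, pow_zero, mul_zero, add_zero, one_mul]
      rw [Finset.mul_sum]
      refine Finset.sum_congr rfl fun k _ => by ring
  rw [hA]
  simp only [pd]
  ring

def Good (ψ : (Fin n → ℝ) → ℝ) (lam : ℝ) (m : ℕ) (F : ℝ → (Fin n → ℝ) → ℝ)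
    (lead : (Fin n → ℝ) → ℝ) : Prop :=
  ∃ b : ℕ → (Fin n → ℝ) → ℝ, (∀ k, ContDiff ℝ (⊤ : ℕ∞) (b k)) ∧ (∀ k, m < k → b k = fun _ => 0) ∧
    b m = lead ∧
    ∀ σ x, F σ x = (∑ k ∈ Finset.range (m+1), σ^k * b k x) *
      Real.exp (-(σ * Real.exp (lam * ψ x)))

lemma good_base (ψ : (Fin n → ℝ) → ℝ) (lam : ℝ) :
    Good ψ lam 0 (fun σ x => Real.exp (-(σ * Real.exp (lam * ψ x)))) (fun _ => 1) := by
  refine ⟨fun k => if k = 0 then (fun _ => 1) else fun _ => 0, ?_, ?_, ?_, ?_⟩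
  · intro k; by_cases h : k = 0 <;> simp [h] <;> exact contDiff_const
  · intro k hk; have : k ≠ 0 := by omega
    simp [this]
  · simp
  · intro σ x; simp

lemma good_step (ψ : (Fin n → ℝ) → ℝ) (hψ : ContDiff ℝ (⊤ : ℕ∞) ψ) (lam : ℝ) (i : Fin n)
    {m : ℕ} {F : ℝ → (Fin n → ℝ) → ℝ} {lead : (Fin n → ℝ) → ℝ}
    (h : Good ψ lam m F lead) :
    Good ψ lam (m+1) (fun σ => pd n i (F σ))
      (fun x => -(lam * pd n i ψ x * Real.exp (lam * ψ x)) * lead x) := by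
  obtain ⟨b, hb, hb0, hbm, hF⟩ := h
  have hEc : ContDiff ℝ (⊤ : ℕ∞) (fun x => lam * pd n i ψ x * Real.exp (lam * ψ x)) :=
    ((contDiff_const.mul (pd_contDiff i hψ)).mul
      (Real.contDiff_exp.comp (contDiff_const.mul hψ)))
  refine ⟨fun k x => pd n i (b k) x - lam * pd n i ψ x * Real.exp (lam * ψ x) * shf b k x,
    ?_, ?_, ?_, ?_⟩
  · intro k
    refine (pd_contDiff i (hb k)).sub (hEc.mul ?_)
    cases k with
    | zero => exact contDiff_const
    | succ j => exact hb j
  · intro k hk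
    cases k with
    | zero => omega
    | succ j =>
      have h1 : b (j+1) = fun _ => 0 := hb0 _ (by omega)
      have h2 : b j = fun _ => 0 := hb0 _ (by omega)
      funext x
      simp [shf, h1, h2, pd]
  · funext x
    have h1 : b (m+1) = fun _ => 0 := hb0 _ (by omega)
    show pd n i (b (m+1)) x - lam * pd n i ψ x * Real.exp (lam * ψ x) * shf b (m+1) x = _
    simp only [shf, h1, hbm, pd]
    simp
  · intro σ x
    show pd n i (F σ) x = _
    have hFσ : F σ = fun y => (∑ k ∈ Finset.range (m+1), σ^k * b k y) *
        Real.exp (-(σ * Real.exp (lam * ψ y))) := funext (hF σ)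
    rw [hFσ]
    simpa using pd_rep ψ hψ lam i m b hb (hb0 _ (by omega)) σ x

lemma good_congr {ψ : (Fin n → ℝ) → ℝ} {lam : ℝ} {m m' : ℕ} {F F' : ℝ → (Fin n → ℝ) → ℝ}
    {lead lead' : (Fin n → ℝ) → ℝ} (h : Good ψ lam m F lead) (hm : m = m')
    (hF : ∀ σ x, F σ x = F' σ x) (hl : ∀ x, lead x = lead' x) : Good ψ lam m' F' lead' := by
  subst hm
  have : F = F' := funext fun σ => funext (hF σ)
  have hl' : lead = lead' := funext hl
  exact this ▸ hl' ▸ h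

lemma good_iter (ψ : (Fin n → ℝ) → ℝ) (hψ : ContDiff ℝ (⊤ : ℕ∞) ψ) (lam : ℝ) (i : Fin n) (c : ℕ)
    {m : ℕ} {F : ℝ → (Fin n → ℝ) → ℝ} {lead : (Fin n → ℝ) → ℝ}
    (h : Good ψ lam m F lead) :
    Good ψ lam (m+c) (fun σ => (pd n i)^[c] (F σ))
      (fun x => (-(lam * pd n i ψ x * Real.exp (lam * ψ x)))^c * lead x) := by
  induction c with
  | zero => exact good_congr h rfl (fun σ x => rfl) (fun x => by simp)
  | succ c ih =>
    refine good_congr (good_step ψ hψ lam i ih) rfl (fun σ x => ?_) (fun x => by ring)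
    rw [Function.iterate_succ_apply']

lemma good_fold (ψ : (Fin n → ℝ) → ℝ) (hψ : ContDiff ℝ (⊤ : ℕ∞) ψ) (lam : ℝ) (α : Fin n → ℕ)
    (L : List (Fin n)) :
    Good ψ lam (L.map α).sum
      (fun σ => L.foldr (fun i g => (pd n i)^[α i] g)
        (fun y => Real.exp (-(σ * Real.exp (lam * ψ y)))))
      (fun x => (L.map (fun j => (-(lam * pd n j ψ x * Real.exp (lam * ψ x)))^(α j))).prod) := by
  induction L with
  | nil => exact good_congr (good_base ψ lam) rfl (fun σ x => rfl) (fun x => by simp)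
  | cons i L ih =>
    refine good_congr (good_iter ψ hψ lam i (α i) ih) ?_ (fun σ x => rfl) (fun x => ?_)
    · simp [List.map_cons, List.sum_cons]; ring
    · simp [List.map_cons, List.prod_cons]

lemma main_rep (ψ : (Fin n → ℝ) → ℝ) (hψ : ContDiff ℝ (⊤ : ℕ∞) ψ) (lam : ℝ) (α : Fin n → ℕ) :
    Good ψ lam (∑ j, α j)
      (fun σ => md n α (fun y => Real.exp (-(σ * Real.exp (lam * ψ y)))))
      (fun x => (-(lam * Real.exp (lam * ψ x)))^(∑ j, α j) * ∏ j, pd n j ψ x ^ α j) := by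
  refine good_congr (good_fold ψ hψ lam α (List.finRange n)) ?_ (fun σ x => rfl) (fun x => ?_)
  · rw [← Fin.sum_univ_def]
  · rw [← Fin.prod_univ_def]
    have : ∀ j : Fin n, (-(lam * pd n j ψ x * Real.exp (lam * ψ x)))^(α j)
        = (-(lam * Real.exp (lam * ψ x)))^(α j) * pd n j ψ x ^ (α j) := by
      intro j
      rw [← mul_pow]; ring_nf
    rw [Finset.prod_congr rfl (fun j _ => this j), Finset.prod_mul_distrib,
      Finset.prod_pow_eq_pow_sum]

end WeightAux

/-- Weight-function estimate: with `φ = θ(t)e^{λψ}`, `r = e^{sφ}`, `ρ = e^{−sφ}`,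
for every multi-index `α` one has
`r·∂^α ρ = (−sφ)^{|α|} λ^{|α|} (∇ψ)^α + s^{|α|−1}·O_λ(1)` uniformly on `G`,
and in particular `|r·∂^α ρ| ≤ C_λ s^{|α|}`. -/
theorem weight_derivative_estimate (n : ℕ) (G : Set (Fin n → ℝ)) (hG : IsOpen G)
    (hGb : Bornology.IsBounded G) (ψ : (Fin n → ℝ) → ℝ) (hψ : ContDiff ℝ (⊤ : ℕ∞) ψ)
    (α : Fin n → ℕ) (lam C₀ : ℝ) (hlam : 1 ≤ lam) (hC₀ : 0 ≤ C₀) :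
    ∃ C > 0, ∀ s θt : ℝ, 1 ≤ s → |θt| ≤ C₀ → ∀ x ∈ G,
      |Real.exp (s * (θt * Real.exp (lam * ψ x))) *
          md n α (fun y => Real.exp (-(s * (θt * Real.exp (lam * ψ y))))) x
        - (-(s * (θt * Real.exp (lam * ψ x)))) ^ (∑ j, α j) * lam ^ (∑ j, α j) *
            ∏ j, (pd n j ψ x) ^ (α j)|
        ≤ C * s ^ (((∑ j, α j : ℕ) : ℝ) - 1)
      ∧ |Real.exp (s * (θt * Real.exp (lam * ψ x))) *
          md n α (fun y => Real.exp (-(s * (θt * Real.exp (lam * ψ y))))) x|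
        ≤ C * s ^ (((∑ j, α j : ℕ) : ℝ)) := by
  classical
  obtain ⟨b, hb, hb0, hbm, hF⟩ := WeightAux.main_rep ψ hψ lam α
  set m : ℕ := ∑ j, α j with hm
  -- uniform bound on the coefficients over G
  have hM : ∀ k : ℕ, ∃ Mk : ℝ, ∀ x ∈ G, |b k x| ≤ Mk := by
    intro k
    obtain ⟨Ck, hCk⟩ := (hGb.isCompact_closure).exists_bound_of_continuousOn
      ((hb k).continuous.continuousOn)
    exact ⟨Ck, fun x hx => by simpa [Real.norm_eq_abs] using hCk x (subset_closure hx)⟩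
  choose Mf hMf using hM
  set Mt : ℝ := 1 + ∑ k ∈ Finset.range (m+1), |Mf k| with hMtdef
  have hMt1 : 1 ≤ Mt := by
    have : (0:ℝ) ≤ ∑ k ∈ Finset.range (m+1), |Mf k| :=
      Finset.sum_nonneg fun k _ => abs_nonneg _
    simp only [hMtdef]; linarith
  have hMtb : ∀ k, k ≤ m → ∀ x ∈ G, |b k x| ≤ Mt := by
    intro k hk x hx
    have h1 : |b k x| ≤ Mf k := hMf k x hx
    have h2 : |Mf k| ≤ ∑ j ∈ Finset.range (m+1), |Mf j| :=
      Finset.single_le_sum (fun j _ => abs_nonneg (Mf j)) (Finset.mem_range.mpr (by omega))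
    calc |b k x| ≤ Mf k := h1
      _ ≤ |Mf k| := le_abs_self _
      _ ≤ Mt := by simp only [hMtdef]; linarith
  have hCb1 : (1:ℝ) ≤ C₀ + 1 := by linarith
  refine ⟨((m:ℝ)+2) * (C₀+1)^(m+1) * Mt, by positivity, ?_⟩
  intro s θt hs hθ x hx
  have hs0 : (0:ℝ) < s := by linarith
  -- rewrite the exponential weight function
  have hfun : (fun y => Real.exp (-(s * (θt * Real.exp (lam * ψ y)))))
      = (fun y => Real.exp (-((s*θt) * Real.exp (lam * ψ y)))) := by
    funext y; ring_nf
  rw [hfun]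
  have hrep : md n α (fun y => Real.exp (-((s*θt) * Real.exp (lam * ψ y)))) x
      = (∑ k ∈ Finset.range (m+1), (s*θt)^k * b k x) *
        Real.exp (-((s*θt) * Real.exp (lam * ψ x))) := hF (s*θt) x
  have hexp : Real.exp (s * (θt * Real.exp (lam * ψ x))) *
      md n α (fun y => Real.exp (-((s*θt) * Real.exp (lam * ψ y)))) x
      = ∑ k ∈ Finset.range (m+1), (s*θt)^k * b k x := by
    rw [hrep]
    have harg : s * (θt * Real.exp (lam * ψ x)) = s * θt * Real.exp (lam * ψ x) := by ring
    rw [harg, ← mul_assoc, mul_comm (Real.exp (s * θt * Real.exp (lam * ψ x))), mul_assoc,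
      ← Real.exp_add]
    simp
  rw [hexp]
  -- the main term equals the top coefficient
  have hmain : (-(s * (θt * Real.exp (lam * ψ x)))) ^ m * lam ^ m * ∏ j, pd n j ψ x ^ α j
      = (s*θt)^m * b m x := by
    have hb' : b m x = (-(lam * Real.exp (lam * ψ x)))^m * ∏ j, pd n j ψ x ^ α j :=
      congrFun hbm x
    have hpow : (-(s * (θt * Real.exp (lam * ψ x)))) ^ m * lam ^ m
        = (s*θt)^m * (-(lam * Real.exp (lam * ψ x)))^m := by
      rw [← mul_pow, ← mul_pow]; congr 1; ring
    rw [hb', hpow, mul_assoc]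
  have hdiff : (∑ k ∈ Finset.range (m+1), (s*θt)^k * b k x)
      - (-(s * (θt * Real.exp (lam * ψ x)))) ^ m * lam ^ m * ∏ j, pd n j ψ x ^ α j
      = ∑ k ∈ Finset.range m, (s*θt)^k * b k x := by
    rw [hmain, Finset.sum_range_succ]; ring
  -- termwise bounds
  have hσ : |s*θt| ≤ s * (C₀+1) := by
    rw [abs_mul, abs_of_pos hs0]
    have : |θt| ≤ C₀ + 1 := by linarith
    exact mul_le_mul_of_nonneg_left this (le_of_lt hs0)
  have hterm : ∀ k : ℕ, (e : ℝ) → ((k:ℝ) ≤ e) → ∀ hkm : k ≤ m,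
      |(s*θt)^k * b k x| ≤ (C₀+1)^(m+1) * Mt * s ^ e := by
    intro k e hke hkm
    rw [abs_mul, abs_pow]
    have h1 : |s*θt|^k ≤ (s*(C₀+1))^k := pow_le_pow_left₀ (abs_nonneg _) hσ k
    have h2 : (s*(C₀+1))^k = s^k * (C₀+1)^k := mul_pow s (C₀+1) k
    have h3 : s^k ≤ s ^ e := by
      rw [← Real.rpow_natCast s k]
      exact Real.rpow_le_rpow_of_exponent_le hs hke
    have h4 : (C₀+1)^k ≤ (C₀+1)^(m+1) := pow_le_pow_right₀ hCb1 (by omega)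
    have h5 : |b k x| ≤ Mt := hMtb k hkm x hx
    have hsk : (0:ℝ) ≤ s^k := le_of_lt (pow_pos hs0 k)
    have hse : (0:ℝ) ≤ s ^ e := le_of_lt (Real.rpow_pos_of_pos hs0 e)
    calc |s*θt|^k * |b k x| ≤ (s*(C₀+1))^k * Mt := by
          apply mul_le_mul h1 h5 (abs_nonneg _) (le_of_lt (pow_pos (by positivity) k))
      _ = s^k * (C₀+1)^k * Mt := by rw [h2]
      _ ≤ s ^ e * (C₀+1)^(m+1) * Mt := by
          apply mul_le_mul_of_nonneg_right _ (by linarith)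
          exact mul_le_mul h3 h4 (by positivity) hse
      _ = (C₀+1)^(m+1) * Mt * s ^ e := by ring
  constructor
  · rw [hdiff]
    calc |∑ k ∈ Finset.range m, (s*θt)^k * b k x|
        ≤ ∑ k ∈ Finset.range m, |(s*θt)^k * b k x| := Finset.abs_sum_le_sum_abs _ _
      _ ≤ ∑ _k ∈ Finset.range m, (C₀+1)^(m+1) * Mt * s ^ ((m:ℝ)-1) := by
          apply Finset.sum_le_sum
          intro k hk
          have hkm : k < m := Finset.mem_range.mp hk
          refine hterm k ((m:ℝ)-1) ?_ (by omega)
          have : (k:ℝ)+1 ≤ (m:ℝ) := by exact_mod_cast hkm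
          linarith
      _ ≤ ((m:ℝ)+2) * (C₀+1)^(m+1) * Mt * s ^ ((m:ℝ)-1) := by
          rw [Finset.sum_const, Finset.card_range, nsmul_eq_mul]
          have hp : (0:ℝ) < (C₀+1)^(m+1) * Mt * s ^ ((m:ℝ)-1) := by
            have := Real.rpow_pos_of_pos hs0 ((m:ℝ)-1)
            positivity
          nlinarith [hp, Nat.cast_nonneg (α := ℝ) m]
  · calc |∑ k ∈ Finset.range (m+1), (s*θt)^k * b k x|
        ≤ ∑ k ∈ Finset.range (m+1), |(s*θt)^k * b k x| := Finset.abs_sum_le_sum_abs _ _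
      _ ≤ ∑ _k ∈ Finset.range (m+1), (C₀+1)^(m+1) * Mt * s ^ (m:ℝ) := by
          apply Finset.sum_le_sum
          intro k hk
          have hkm : k < m + 1 := Finset.mem_range.mp hk
          exact hterm k (m:ℝ) (by exact_mod_cast Nat.lt_succ_iff.mp hkm) (by omega)
      _ ≤ ((m:ℝ)+2) * (C₀+1)^(m+1) * Mt * s ^ (m:ℝ) := by
          rw [Finset.sum_const, Finset.card_range, nsmul_eq_mul]
          have hp : (0:ℝ) < (C₀+1)^(m+1) * Mt * s ^ (m:ℝ) := by
            have := Real.rpow_pos_of_pos hs0 (m:ℝ)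
            positivity
          push_cast
          nlinarith [hp, Nat.cast_nonneg (α := ℝ) m]
end
end

section
/- Let ρ = e^{−sφ} and r = e^{sφ} with φ = e^{λψ}, ψ smooth, and suppose sh ≤ ε. Then the discretely averaged/differenced weight satisfies r·A_i D_i ρ = r·∂_i ρ + s·O_λ((sh)²), i.e. the discrete mixed operator A_i D_i applied to ρ, multiplied by r, differs from r·∂_i ρ by an error bounded by C_λ · s · (sh)². -/
noncomputable section

/-- The `i`-th standard basis vector of `ℝⁿ`. -/
def ev (n : ℕ) (i : Fin n) : Fin n → ℝ := Pi.single i 1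

/-- Discrete difference operator in direction `eᵢ` with mesh size `h`. -/
def Dop (n : ℕ) (h : ℝ) (i : Fin n) (u : (Fin n → ℝ) → ℝ) : (Fin n → ℝ) → ℝ :=
  fun x => (u (x + (h / 2) • ev n i) - u (x - (h / 2) • ev n i)) / h

/-- Discrete average operator in direction `eᵢ` with mesh size `h`. -/
def Aop (n : ℕ) (h : ℝ) (i : Fin n) (u : (Fin n → ℝ) → ℝ) : (Fin n → ℝ) → ℝ :=
  fun x => (u (x + (h / 2) • ev n i) + u (x - (h / 2) • ev n i)) / 2


open Real Set

lemma central_diff {H H1 H2 H3 : ℝ → ℝ} {h B : ℝ} (hh : 0 < h) (hB : 0 ≤ B)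
    (dH : ∀ t, HasDerivAt H (H1 t) t)
    (dH1 : ∀ t, HasDerivAt H1 (H2 t) t)
    (dH2 : ∀ t, HasDerivAt H2 (H3 t) t)
    (bd : ∀ t ∈ Set.Icc (-h) h, |H3 t| ≤ B) :
    |(H h - H (-h)) / (2*h) - H1 0| ≤ B * h^2 := by
  set F : ℝ → ℝ := fun t => H t - H (-t) - 2*t*H1 0 with hF
  set F1 : ℝ → ℝ := fun t => H1 t + H1 (-t) - 2*H1 0 with hF1
  set F2 : ℝ → ℝ := fun t => H2 t - H2 (-t) with hF2
  have dF : ∀ t, HasDerivAt F (F1 t) t := by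
    intro t
    have h1 : HasDerivAt (fun t : ℝ => H (-t)) (H1 (-t) * (-1)) t :=
      (dH (-t)).comp t (hasDerivAt_neg t)
    have h2 : HasDerivAt (fun t : ℝ => 2*t*H1 0) (2*H1 0) t := by
      simpa using ((hasDerivAt_id t).const_mul 2).mul_const (H1 0)
    have := ((dH t).sub h1).sub h2
    rw [show H1 t - H1 (-t) * -1 - 2 * H1 0 = F1 t by simp only [hF1]; ring] at this; exact this
  have dF1 : ∀ t, HasDerivAt F1 (F2 t) t := by
    intro t
    have h1 : HasDerivAt (fun t : ℝ => H1 (-t)) (H2 (-t) * (-1)) t :=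
      (dH1 (-t)).comp t (hasDerivAt_neg t)
    have := ((dH1 t).add h1).sub_const (2*H1 0)
    rw [show H2 t + H2 (-t) * -1 = F2 t by simp only [hF2]; ring] at this; exact this
  -- bound on F2 on [0,h]
  have bdF2 : ∀ a ∈ Set.Icc (0:ℝ) h, |F2 a| ≤ 2*B*h := by
    intro a ha
    have h1 : ∀ t ∈ Set.Icc (-h) h, HasDerivWithinAt H2 (H3 t) (Set.Icc (-h) h) t :=
      fun t _ => (dH2 t).hasDerivWithinAt
    have hmem1 : a ∈ Set.Icc (-h) h := ⟨le_trans (by linarith) ha.1, ha.2⟩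
    have hmem2 : -a ∈ Set.Icc (-h) h := ⟨by linarith [ha.2], by linarith [ha.1]⟩
    have := Convex.norm_image_sub_le_of_norm_hasDerivWithin_le h1
      (fun t ht => bd t ht) (convex_Icc _ _) hmem2 hmem1
    simp only [Real.norm_eq_abs] at this
    calc |F2 a| = |H2 a - H2 (-a)| := rfl
      _ ≤ B * |a - -a| := this
      _ ≤ 2*B*h := by
          rw [abs_of_nonneg (by linarith [ha.1] : (0:ℝ) ≤ a - -a)]
          nlinarith [ha.1, ha.2]
  -- bound F1 on [0,h]
  have bdF1 : ∀ a ∈ Set.Icc (0:ℝ) h, |F1 a| ≤ 2*B*h*h := by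
    intro a ha
    have h1 : ∀ t ∈ Set.Icc (0:ℝ) h, HasDerivWithinAt F1 (F2 t) (Set.Icc 0 h) t :=
      fun t _ => (dF1 t).hasDerivWithinAt
    have := Convex.norm_image_sub_le_of_norm_hasDerivWithin_le h1
      (fun t ht => bdF2 t ht) (convex_Icc _ _) (Set.left_mem_Icc.2 hh.le) ha
    simp only [Real.norm_eq_abs] at this
    have hF10 : F1 0 = 0 := by simp [hF1]; ring
    rw [hF10, sub_zero] at this
    rw [sub_zero, abs_of_nonneg ha.1] at this
    have := mul_le_mul_of_nonneg_left ha.2 (by positivity : (0:ℝ) ≤ 2*B*h)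
    linarith
  -- bound F h
  have bdF : |F h| ≤ 2*B*h*h*h := by
    have h1 : ∀ t ∈ Set.Icc (0:ℝ) h, HasDerivWithinAt F (F1 t) (Set.Icc 0 h) t :=
      fun t _ => (dF t).hasDerivWithinAt
    have := Convex.norm_image_sub_le_of_norm_hasDerivWithin_le h1
      (fun t ht => bdF1 t ht) (convex_Icc _ _) (Set.left_mem_Icc.2 hh.le)
      (Set.right_mem_Icc.2 hh.le)
    simp only [Real.norm_eq_abs] at this
    have hF0 : F 0 = 0 := by simp [hF]
    rw [hF0, sub_zero, sub_zero, abs_of_nonneg hh.le] at this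
    linarith
  have key : (H h - H (-h)) / (2*h) - H1 0 = F h / (2*h) := by
    field_simp [hF]
    simp only [hF]; ring
  rw [key, abs_div, abs_of_pos (by linarith : (0:ℝ) < 2*h)]
  rw [div_le_iff₀ (by linarith : (0:ℝ) < 2*h)]
  calc |F h| ≤ 2*B*h*h*h := bdF
    _ = B * h^2 * (2*h) := by ring

lemma Wbound {s lam q Q e eb : ℝ} (hs : 1 ≤ s) (hl : 1 ≤ lam) (hq : |q| ≤ Q)
    (he : 0 < e) (heb : e ≤ eb) : |-(s*lam) * (q * e)| ≤ s * (lam * Q * eb) := by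
  have hQ : 0 ≤ Q := le_trans (abs_nonneg q) hq
  rw [abs_mul, abs_neg, abs_mul, abs_mul, abs_of_nonneg (le_trans zero_le_one hs),
    abs_of_nonneg (le_trans zero_le_one hl), abs_of_pos he]
  have key : |q| * e ≤ Q * eb := mul_le_mul hq heb he.le hQ
  calc s*lam*(|q| * e) ≤ s*lam*(Q*eb) :=
        mul_le_mul_of_nonneg_left key (by nlinarith)
    _ = s * (lam * Q * eb) := by ring

lemma H3bound {w1 w2 w3 c1 c2 c3 ht hb s : ℝ} (h1 : |w1| ≤ s*c1) (h2 : |w2| ≤ s*c2)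
    (h3 : |w3| ≤ s*c3) (hs : 1 ≤ s) (hH : 0 < ht) (hHB : ht ≤ hb) :
    |(w3 + 3*(w1*w2) + w1*w1*w1) * ht| ≤ (c3 + 3*c1*c2 + c1^3) * hb * s^3 := by
  have hc1 : 0 ≤ c1 := by nlinarith [le_trans (abs_nonneg w1) h1]
  have hc2 : 0 ≤ c2 := by nlinarith [le_trans (abs_nonneg w2) h2]
  have hc3 : 0 ≤ c3 := by nlinarith [le_trans (abs_nonneg w3) h3]
  rw [abs_mul, abs_of_pos hH]
  have tri : |w3 + 3*(w1*w2) + w1*w1*w1| ≤ |w3| + 3*(|w1| * |w2|) + |w1|^3 := by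
    have t1 := abs_add_le (w3 + 3*(w1*w2)) (w1*w1*w1)
    have t2 := abs_add_le w3 (3*(w1*w2))
    have e1 : |3*(w1*w2)| = 3*(|w1| * |w2|) := by
      rw [abs_mul, abs_mul]
      norm_num
    have e2 : |w1*w1*w1| = |w1|^3 := by
      rw [abs_mul, abs_mul]; ring
    linarith
  have p1 : |w1| * |w2| ≤ (s*c1)*(s*c2) :=
    mul_le_mul h1 h2 (abs_nonneg _) (by nlinarith)
  have p2 : |w1|^3 ≤ (s*c1)^3 := pow_le_pow_left₀ (abs_nonneg _) h1 3
  have hsq : 1 ≤ s^2 := by nlinarith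
  have hs3 : s ≤ s^3 := by nlinarith [mul_le_mul_of_nonneg_left hsq (by linarith : (0:ℝ) ≤ s)]
  have hs2 : s^2 ≤ s^3 := by nlinarith [mul_le_mul_of_nonneg_left hs (sq_nonneg s)]
  have bw : |w3| + 3*(|w1| * |w2|) + |w1|^3 ≤ (c3 + 3*c1*c2 + c1^3) * s^3 := by
    nlinarith [mul_nonneg (by nlinarith : (0:ℝ) ≤ s^3 - s) hc3,
      mul_nonneg (by nlinarith : (0:ℝ) ≤ s^3 - s^2) (mul_nonneg hc1 hc2),
      mul_nonneg (mul_nonneg hc1 hc1) hc1]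
  calc |w3 + 3*(w1*w2) + w1*w1*w1| * ht
      ≤ (|w3| + 3*(|w1| * |w2|) + |w1|^3) * ht := mul_le_mul_of_nonneg_right tri hH.le
    _ ≤ ((c3 + 3*c1*c2 + c1^3) * s^3) * hb := by
        apply mul_le_mul bw hHB hH.le
        positivity
    _ = (c3 + 3*c1*c2 + c1^3) * hb * s^3 := by ring

set_option maxHeartbeats 3000000 in
/-- With `φ = e^{λψ}`, `r = e^{sφ}`, `ρ = e^{−sφ}` and `sh ≤ ε`, the discrete mixed
operator satisfies `r·A_i D_i ρ = r·∂_i ρ + s·O_λ((sh)²)`. -/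
theorem discrete_weight_mixed_estimate (n : ℕ) (i : Fin n) (G : Set (Fin n → ℝ))
    (hG : IsOpen G) (hGb : Bornology.IsBounded G) (ψ : (Fin n → ℝ) → ℝ)
    (hψ : ContDiff ℝ (⊤ : ℕ∞) ψ) (lam ε : ℝ) (hlam : 1 ≤ lam) (hε0 : 0 < ε) (hε : ε ≤ 1) :
    ∃ C > 0, ∀ s h : ℝ, 1 ≤ s → 0 < h → s * h ≤ ε → ∀ x ∈ G,
      |Real.exp (s * Real.exp (lam * ψ x)) *
          Aop n h i (Dop n h i (fun y => Real.exp (-(s * Real.exp (lam * ψ y))))) x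
        - Real.exp (s * Real.exp (lam * ψ x)) *
            pd n i (fun y => Real.exp (-(s * Real.exp (lam * ψ y)))) x|
        ≤ C * s * (s * h) ^ 2 := by
  classical
  set v : Fin n → ℝ := Pi.single i 1 with hv
  have hvnorm : ‖v‖ = 1 := by rw [hv, Pi.norm_single]; simp
  set g1 : (Fin n → ℝ) → ℝ := fun y => fderiv ℝ ψ y v with hg1def
  have hg1 : ContDiff ℝ (⊤ : ℕ∞) g1 := (hψ.fderiv_right (by simp)).clm_apply contDiff_const
  set g2 : (Fin n → ℝ) → ℝ := fun y => fderiv ℝ g1 y v with hg2def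
  have hg2 : ContDiff ℝ (⊤ : ℕ∞) g2 := (hg1.fderiv_right (by simp)).clm_apply contDiff_const
  set g3 : (Fin n → ℝ) → ℝ := fun y => fderiv ℝ g2 y v with hg3def
  obtain ⟨R, hR⟩ := hGb.subset_closedBall 0
  set K : Set (Fin n → ℝ) := Metric.closedBall 0 (|R| + 1) with hK
  have hKc : IsCompact K := isCompact_closedBall _ _
  obtain ⟨Mψ, hMψ⟩ := hKc.exists_bound_of_continuousOn hψ.continuous.continuousOn
  obtain ⟨Ma, hMa⟩ := hKc.exists_bound_of_continuousOn hg1.continuous.continuousOn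
  obtain ⟨Mb, hMb⟩ := hKc.exists_bound_of_continuousOn hg2.continuous.continuousOn
  obtain ⟨Mc, hMc⟩ := hKc.exists_bound_of_continuousOn
    ((hg2.fderiv_right (by simp)).clm_apply contDiff_const : ContDiff ℝ (⊤ : ℕ∞) g3).continuous.continuousOn
  have h0K : (0 : Fin n → ℝ) ∈ K := by
    rw [hK]
    simp [Metric.mem_closedBall]
    positivity
  have hMψ0 : 0 ≤ Mψ := le_trans (norm_nonneg _) (hMψ 0 h0K)
  have hMa0 : 0 ≤ Ma := le_trans (norm_nonneg _) (hMa 0 h0K)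
  have hMb0 : 0 ≤ Mb := le_trans (norm_nonneg _) (hMb 0 h0K)
  have hMc0 : 0 ≤ Mc := le_trans (norm_nonneg _) (hMc 0 h0K)
  set Eb : ℝ := Real.exp (lam * Mψ) with hEbdef
  have hEb0 : 0 < Eb := Real.exp_pos _
  set c1 : ℝ := lam * Ma * Eb with hc1def
  set c2 : ℝ := lam * (Mb + lam * Ma^2) * Eb with hc2def
  set c3 : ℝ := lam * (Mc + 3*lam*Ma*Mb + lam^2 * Ma^3) * Eb with hc3def
  have hc1 : 0 ≤ c1 := by
    rw [hc1def]; positivity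
  set HB : ℝ := Real.exp c1 with hHBdef
  set B0 : ℝ := (c3 + 3*c1*c2 + c1^3) * HB with hB0def
  refine ⟨B0 + 1, ?_, ?_⟩
  · have hc2' : 0 ≤ c2 := by rw [hc2def]; positivity
    have hc3' : 0 ≤ c3 := by rw [hc3def]; positivity
    have : 0 ≤ B0 := by
      rw [hB0def]
      have : 0 < HB := Real.exp_pos _
      positivity
    linarith
  intro s h hs hh hsh x hx
  have hhε : h ≤ ε := by nlinarith
  have hxK : ∀ t : ℝ, |t| ≤ h → x + t • v ∈ K := by
    intro t ht
    have hx' : ‖x‖ ≤ R := by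
      simpa [Metric.mem_closedBall, dist_zero_right] using hR hx
    have htv : ‖t • v‖ = |t| := by rw [norm_smul, hvnorm, Real.norm_eq_abs, mul_one]
    have h1 : ‖x + t • v‖ ≤ ‖x‖ + ‖t • v‖ := norm_add_le _ _
    rw [hK]
    simp only [Metric.mem_closedBall, dist_zero_right]
    have : |t| ≤ 1 := le_trans ht (le_trans hhε hε)
    have : R ≤ |R| := le_abs_self R
    calc ‖x + t • v‖ ≤ ‖x‖ + ‖t • v‖ := h1
      _ ≤ R + |t| := by rw [htv]; linarith
      _ ≤ |R| + 1 := by linarith [le_abs_self R, le_trans ht (le_trans hhε hε)]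
  have dline : ∀ t : ℝ, HasDerivAt (fun u : ℝ => x + u • v) v t := by
    intro t
    simpa using ((hasDerivAt_id t).smul_const v).const_add x
  have dcomp : ∀ (g : (Fin n → ℝ) → ℝ), ContDiff ℝ (⊤ : ℕ∞) g → ∀ t : ℝ,
      HasDerivAt (fun u : ℝ => g (x + u • v)) (fderiv ℝ g (x + t • v) v) t := by
    intro g hg t
    have := ((hg.differentiable (by simp)) (x + t • v)).hasFDerivAt.comp_hasDerivAt t (dline t)
    exact this
  set φx : ℝ := Real.exp (lam * ψ x) with hφx
  set E : ℝ → ℝ := fun t => Real.exp (lam * ψ (x + t • v)) with hE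
  set A : ℝ → ℝ := fun t => g1 (x + t • v) with hA
  set Bf : ℝ → ℝ := fun t => g2 (x + t • v) with hBf
  set Cf : ℝ → ℝ := fun t => g3 (x + t • v) with hCf
  set W1 : ℝ → ℝ := fun t => -(s*lam) * (A t * E t) with hW1
  set W2 : ℝ → ℝ := fun t => -(s*lam) * ((Bf t + lam * (A t * A t)) * E t) with hW2
  set W3 : ℝ → ℝ := fun t => -(s*lam) * ((Cf t + 3*lam*A t*Bf t + lam^2 * A t^3) * E t) with hW3
  set H : ℝ → ℝ := fun t => Real.exp (s * φx - s * E t) with hH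
  set H1 : ℝ → ℝ := fun t => W1 t * H t with hH1
  set H2 : ℝ → ℝ := fun t => (W2 t + W1 t * W1 t) * H t with hH2
  set H3 : ℝ → ℝ := fun t => (W3 t + 3*(W1 t*W2 t) + W1 t * W1 t * W1 t) * H t with hH3
  have hE0 : E 0 = φx := by rw [hE, hφx]; simp
  have dψl : ∀ t, HasDerivAt (fun u : ℝ => ψ (x + u • v)) (A t) t := fun t => dcomp ψ hψ t
  have dA : ∀ t, HasDerivAt A (Bf t) t := fun t => dcomp g1 hg1 t
  have dBf : ∀ t, HasDerivAt Bf (Cf t) t := fun t => dcomp g2 hg2 t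
  have dE : ∀ t, HasDerivAt E (lam * A t * E t) t := by
    intro t
    have h0 : HasDerivAt E (E t * (lam * A t)) t := ((dψl t).const_mul lam).exp
    have he : E t * (lam * A t) = lam * A t * E t := by ring
    rwa [he] at h0
  have dH : ∀ t, HasDerivAt H (H1 t) t := by
    intro t
    have h0 : HasDerivAt H (Real.exp (s * φx - s * E t) * (-(s * (lam * A t * E t)))) t :=
      (((dE t).const_mul s).const_sub (s * φx)).exp
    have he : Real.exp (s * φx - s * E t) * (-(s * (lam * A t * E t))) = H1 t := by
      rw [hH1]
      simp only [hW1, hH]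
      ring
    rwa [he] at h0
  have dW1 : ∀ t, HasDerivAt W1 (W2 t) t := by
    intro t
    have h0 := ((dA t).mul (dE t)).const_mul (-(s*lam))
    have he : -(s*lam) * (Bf t * E t + A t * (lam * A t * E t)) = W2 t := by
      rw [hW2]; ring
    rwa [he] at h0
  have dW2 : ∀ t, HasDerivAt W2 (W3 t) t := by
    intro t
    have h0 := (((dBf t).add (((dA t).mul (dA t)).const_mul lam)).mul (dE t)).const_mul (-(s*lam))
    have he : -(s*lam) * ((Cf t + lam * (Bf t * A t + A t * Bf t)) * E t
        + (Bf t + lam * (A t * A t)) * (lam * A t * E t)) = W3 t := by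
      rw [hW3]; ring
    rw [← he]; exact h0
  have dH1 : ∀ t, HasDerivAt H1 (H2 t) t := by
    intro t
    have h0 := (dW1 t).mul (dH t)
    have he : W2 t * H t + W1 t * H1 t = H2 t := by
      rw [hH2, hH1]; ring
    rwa [he] at h0
  have dH2 : ∀ t, HasDerivAt H2 (H3 t) t := by
    intro t
    have h0 := (((dW2 t).add ((dW1 t).mul (dW1 t))).mul (dH t))
    have he : (W3 t + (W2 t * W1 t + W1 t * W2 t)) * H t + (W2 t + W1 t * W1 t) * H1 t = H3 t := by
      rw [hH3, hH1]; ring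
    rw [← he]; exact h0
  -- bounds
  have hAb : ∀ t : ℝ, |t| ≤ h → |A t| ≤ Ma := by
    intro t ht
    have := hMa _ (hxK t ht)
    simpa [hA, Real.norm_eq_abs] using this
  have hBb : ∀ t : ℝ, |t| ≤ h → |Bf t| ≤ Mb := by
    intro t ht
    have := hMb _ (hxK t ht)
    simpa [hBf, Real.norm_eq_abs] using this
  have hCb : ∀ t : ℝ, |t| ≤ h → |Cf t| ≤ Mc := by
    intro t ht
    have := hMc _ (hxK t ht)
    simpa [hCf, hg3def, Real.norm_eq_abs] using this
  have hEpos : ∀ t : ℝ, 0 < E t := fun t => Real.exp_pos _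
  have hElt : ∀ t : ℝ, |t| ≤ h → E t ≤ Eb := by
    intro t ht
    rw [hE, hEbdef]
    apply Real.exp_le_exp.2
    have hb := hMψ _ (hxK t ht)
    rw [Real.norm_eq_abs] at hb
    have : ψ (x + t • v) ≤ Mψ := le_trans (le_abs_self _) hb
    nlinarith
  have hEdiff : ∀ t : ℝ, |t| ≤ h → |E 0 - E t| ≤ c1 * |t| := by
    intro t ht
    have hds : ∀ u ∈ Set.Icc (-h) h, HasDerivWithinAt E (lam * A u * E u) (Set.Icc (-h) h) u :=
      fun u _ => (dE u).hasDerivWithinAt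
    have hbd : ∀ u ∈ Set.Icc (-h) h, ‖lam * A u * E u‖ ≤ c1 := by
      intro u hu
      have hu' : |u| ≤ h := abs_le.2 ⟨hu.1, hu.2⟩
      have h1 : |A u| ≤ Ma := hAb u hu'
      have h2 : E u ≤ Eb := hElt u hu'
      have h3 : 0 < E u := hEpos u
      rw [Real.norm_eq_abs, abs_mul, abs_mul,
        abs_of_nonneg (by linarith : (0:ℝ) ≤ lam), abs_of_pos h3]
      rw [hc1def]
      calc lam * |A u| * E u = lam * (|A u| * E u) := by ring
        _ ≤ lam * (Ma * Eb) := by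
            apply mul_le_mul_of_nonneg_left (mul_le_mul h1 h2 h3.le hMa0) (by linarith)
        _ = lam * Ma * Eb := by ring
    have hmt : t ∈ Set.Icc (-h) h := abs_le.1 ht
    have hm0 : (0:ℝ) ∈ Set.Icc (-h) h := ⟨by linarith, hh.le⟩
    have := Convex.norm_image_sub_le_of_norm_hasDerivWithin_le hds hbd (convex_Icc _ _) hmt hm0
    simpa [Real.norm_eq_abs] using this
  have hHb : ∀ t : ℝ, |t| ≤ h → H t ≤ HB := by
    intro t ht
    have h1 : E 0 - E t ≤ c1 * |t| := le_trans (le_abs_self _) (hEdiff t ht)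
    have h2 : s * φx - s * E t ≤ c1 := by
      calc s * φx - s * E t = s * (E 0 - E t) := by rw [hE0]; ring
        _ ≤ s * (c1 * |t|) := mul_le_mul_of_nonneg_left h1 (by linarith)
        _ = c1 * (s * |t|) := by ring
        _ ≤ c1 * (s * h) := by
            apply mul_le_mul_of_nonneg_left (mul_le_mul_of_nonneg_left ht (by linarith)) hc1
        _ ≤ c1 * 1 := mul_le_mul_of_nonneg_left (le_trans hsh hε) hc1
        _ = c1 := mul_one c1
    rw [hH, hHBdef]
    exact Real.exp_le_exp.2 h2
  have hW1b : ∀ t : ℝ, |t| ≤ h → |W1 t| ≤ s * c1 := by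
    intro t ht
    rw [hW1, hc1def]
    exact Wbound hs hlam (hAb t ht) (hEpos t) (hElt t ht)
  have hW2b : ∀ t : ℝ, |t| ≤ h → |W2 t| ≤ s * c2 := by
    intro t ht
    rw [hW2, hc2def]
    apply Wbound hs hlam _ (hEpos t) (hElt t ht)
    have h1 : |A t| ≤ Ma := hAb t ht
    have h2 : |Bf t| ≤ Mb := hBb t ht
    have h3 : |lam * (A t * A t)| ≤ lam * Ma ^ 2 := by
      rw [abs_mul, abs_of_nonneg (by linarith : (0:ℝ) ≤ lam), abs_mul]
      nlinarith [mul_le_mul h1 h1 (abs_nonneg (A t)) hMa0]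
    calc |Bf t + lam * (A t * A t)| ≤ |Bf t| + |lam * (A t * A t)| := abs_add_le _ _
      _ ≤ Mb + lam * Ma ^ 2 := by linarith
  have hW3b : ∀ t : ℝ, |t| ≤ h → |W3 t| ≤ s * c3 := by
    intro t ht
    rw [hW3, hc3def]
    apply Wbound hs hlam _ (hEpos t) (hElt t ht)
    have h1 : |A t| ≤ Ma := hAb t ht
    have h2 : |Bf t| ≤ Mb := hBb t ht
    have h3 : |Cf t| ≤ Mc := hCb t ht
    have h4 : |3*lam*A t*Bf t| ≤ 3*lam*Ma*Mb := by
      rw [abs_mul, abs_mul, abs_mul]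
      have : |(3:ℝ)| = 3 := by norm_num
      rw [this, abs_of_nonneg (by linarith : (0:ℝ) ≤ lam)]
      have key : |A t| * |Bf t| ≤ Ma * Mb := mul_le_mul h1 h2 (abs_nonneg _) hMa0
      nlinarith [key, mul_le_mul_of_nonneg_left key (by linarith : (0:ℝ) ≤ 3*lam)]
    have h5 : |lam^2 * A t^3| ≤ lam^2 * Ma^3 := by
      rw [abs_mul, abs_pow, abs_pow, abs_of_nonneg (by linarith : (0:ℝ) ≤ lam)]
      have key := pow_le_pow_left₀ (abs_nonneg (A t)) h1 3
      nlinarith [mul_le_mul_of_nonneg_left key (sq_nonneg lam)]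
    calc |Cf t + 3*lam*A t*Bf t + lam^2 * A t^3|
        ≤ |Cf t + 3*lam*A t*Bf t| + |lam^2 * A t^3| := abs_add_le _ _
      _ ≤ |Cf t| + |3*lam*A t*Bf t| + |lam^2 * A t^3| := by linarith [abs_add_le (Cf t) (3*lam*A t*Bf t)]
      _ ≤ Mc + 3*lam*Ma*Mb + lam^2 * Ma^3 := by linarith
  have hH3bd : ∀ t ∈ Set.Icc (-h) h, |H3 t| ≤ B0 * s^3 := by
    intro t ht'
    have ht : |t| ≤ h := abs_le.2 ⟨ht'.1, ht'.2⟩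
    have := H3bound (hW1b t ht) (hW2b t ht) (hW3b t ht) hs (Real.exp_pos _) (hHb t ht)
    rw [hH3, hB0def]
    calc |(W3 t + 3*(W1 t*W2 t) + W1 t * W1 t * W1 t) * H t|
        ≤ (c3 + 3*c1*c2 + c1^3) * HB * s^3 := by
          have hHt : H t = Real.exp (s * φx - s * E t) := by rw [hH]
          rw [hHt]
          exact H3bound (hW1b t ht) (hW2b t ht) (hW3b t ht) hs (Real.exp_pos _)
            (by rw [← hHt]; exact hHb t ht)
      _ = (c3 + 3*c1*c2 + c1^3) * HB * s^3 := rfl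
  have cd := central_diff hh (by positivity : (0:ℝ) ≤ B0 * s^3) dH dH1 dH2 hH3bd
  -- identification of the goal with the H picture
  have hfold : ∀ t : ℝ, Real.exp (s * φx) * Real.exp (-(s * Real.exp (lam * ψ (x + t • v)))) = H t := by
    intro t
    have hHt : H t = Real.exp (s * φx - s * Real.exp (lam * ψ (x + t • v))) := rfl
    rw [hHt, ← Real.exp_add]
    congr 1
    try ring
  have keyA : Real.exp (s * φx) *
      Aop n h i (Dop n h i (fun y => Real.exp (-(s * Real.exp (lam * ψ y))))) x
      = (H h - H (-h)) / (2*h) := by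
    have hev : ev n i = v := rfl
    have e1 : x + (h/2) • ev n i + (h/2) • ev n i = x + h • v := by
      rw [hev, add_assoc, ← add_smul]; norm_num
    have e2 : x + (h/2) • ev n i - (h/2) • ev n i = x := by
      rw [hev]; exact add_sub_cancel_right _ _
    have e3 : x - (h/2) • ev n i + (h/2) • ev n i = x := by
      rw [hev]; exact sub_add_cancel _ _
    have e4 : x - (h/2) • ev n i - (h/2) • ev n i = x + (-h) • v := by
      rw [hev, neg_smul, ← sub_eq_add_neg, sub_sub, ← add_smul,
        show h/2 + h/2 = h by ring]
    simp only [Aop, Dop, e1, e2, e3, e4]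
    rw [← hfold h, ← hfold (-h)]
    field_simp
    ring
  have keyB : Real.exp (s * φx) *
      pd n i (fun y => Real.exp (-(s * Real.exp (lam * ψ y)))) x = H1 0 := by
    have hψd : HasFDerivAt ψ (fderiv ℝ ψ x) x := (hψ.differentiable (by simp) x).hasFDerivAt
    have hd := ((hψd.const_mul lam).exp.const_mul s).neg.exp
    simp only [pd]
    rw [HasFDerivAt.fderiv (f := fun y => Real.exp (-(s * Real.exp (lam * ψ y)))) hd]
    have hA0 : A 0 = fderiv ℝ ψ x (Pi.single i 1) := by
      rw [hA, hg1def]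
      simp [hv]
    simp only [ContinuousLinearMap.coe_smul', Pi.smul_apply, ContinuousLinearMap.neg_apply,
      ContinuousLinearMap.coe_neg', smul_eq_mul]
    simp only [Pi.neg_apply, Pi.smul_apply, smul_eq_mul]
    rw [← hA0]
    have hH10 : H1 0 = -(s*lam) * (A 0 * Real.exp (lam * ψ x)) := by
      have h1 : H1 0 = -(s*lam) * (A 0 * E 0) * Real.exp (s * φx - s * E 0) := rfl
      rw [h1, hE0, sub_self, Real.exp_zero, hφx, mul_one]
    rw [hH10, hφx]
    have hcancel : Real.exp (s * Real.exp (lam * ψ x)) *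
        Real.exp (-(s * Real.exp (lam * ψ x))) = 1 := by
      rw [← Real.exp_add]; simp
    linear_combination (-(s * (Real.exp (lam * ψ x) * (lam * A 0)))) * hcancel
  rw [keyA, keyB]
  calc |(H h - H (-h)) / (2*h) - H1 0| ≤ B0 * s^3 * h^2 := cd
    _ = B0 * s * (s*h)^2 := by ring
    _ ≤ (B0 + 1) * s * (s*h)^2 := by nlinarith [sq_nonneg (s*h)]
end
end
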